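/- arXiv:1708.01150 — 2 statements merged into one kernel-verified Lean document; each statement's English description precedes it below -/
import Mathlib

section
/- Let k ∈ {-1, 0, 1} and suppose H, y : I → ℝ are differentiable with y > 0, satisfying Ḣ = -3H² - 2ky and ẏ = -2yH on an interval I. Then the quantity (H² + ky)/y³ is constant on I. -/
/-! Along the flow, both the numerator `N = H² + ky` and the denominator `y³` obey the same
linear equation `ż = -6H z`, so their ratio has zero derivative and is constant on the
convex set `I`. -/

theorem HasDerivAt.div_of_same_logDeriv {f g : ℝ → ℝ} {c t : ℝ}
    (hf : HasDerivAt f (c * f t) t) (hg : HasDerivAt g (c * g t) t) (hg0 : g t ≠ 0) :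
    HasDerivAt (fun s => f s / g s) 0 t := by
  refine (hf.fun_div hg hg0).congr_deriv ?_
  ring

theorem Convex.is_const_of_hasDerivWithinAt_zero {E : Type*} [NormedAddCommGroup E]
    [NormedSpace ℝ E] {f : ℝ → E} {s : Set ℝ} {x y : ℝ} (hs : Convex ℝ s)
    (hf : ∀ t ∈ s, HasDerivWithinAt f 0 s t) (hx : x ∈ s) (hy : y ∈ s) : f x = f y := by
  simpa [sub_eq_zero, eq_comm] using
    hs.norm_image_sub_le_of_norm_hasDerivWithin_le (C := 0) hf (fun _ _ => by simp) hx hy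

section FRW

variable {k t : ℝ} {H y : ℝ → ℝ}

theorem hasDerivAt_frw_numerator (hH : HasDerivAt H (-3 * H t ^ 2 - 2 * k * y t) t)
    (hy : HasDerivAt y (-2 * y t * H t) t) :
    HasDerivAt (fun s => H s ^ 2 + k * y s) (-6 * H t * (H t ^ 2 + k * y t)) t := by
  refine ((hH.fun_pow 2).fun_add (hy.const_mul k)).congr_deriv ?_
  ring

theorem hasDerivAt_frw_cube (hy : HasDerivAt y (-2 * y t * H t) t) :
    HasDerivAt (fun s => y s ^ 3) (-6 * H t * y t ^ 3) t := by
  refine (hy.fun_pow 3).congr_deriv ?_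
  ring

theorem hasDerivAt_frw_invariant (hH : HasDerivAt H (-3 * H t ^ 2 - 2 * k * y t) t)
    (hy : HasDerivAt y (-2 * y t * H t) t) (hy0 : y t ≠ 0) :
    HasDerivAt (fun s => (H s ^ 2 + k * y s) / y s ^ 3) 0 t :=
  (hasDerivAt_frw_numerator hH hy).div_of_same_logDeriv (hasDerivAt_frw_cube hy)
    (pow_ne_zero 3 hy0)

end FRW

theorem stmt5_general (k : ℝ)
    (I : Set ℝ) (hI : Convex ℝ I)
    (H y H' y' : ℝ → ℝ)
    (hypos : ∀ t ∈ I, 0 < y t)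
    (hH : ∀ t ∈ I, HasDerivAt H (H' t) t) (hy : ∀ t ∈ I, HasDerivAt y (y' t) t)
    (heqH : ∀ t ∈ I, H' t = -3 * (H t) ^ 2 - 2 * k * y t)
    (heqy : ∀ t ∈ I, y' t = -2 * y t * H t) :
    ∀ s ∈ I, ∀ t ∈ I,
      ((H s) ^ 2 + k * y s) / (y s) ^ 3 = ((H t) ^ 2 + k * y t) / (y t) ^ 3 := by
  intro s hs t ht
  refine hI.is_const_of_hasDerivWithinAt_zero (f := fun r => (H r ^ 2 + k * y r) / y r ^ 3)
    (fun r hr => ?_) hs ht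
  have hHr := heqH r hr ▸ hH r hr
  have hyr := heqy r hr ▸ hy r hr
  exact (hasDerivAt_frw_invariant hHr hyr (hypos r hr).ne').hasDerivWithinAt

/-- For the curved FRW massless-scalar system `Ḣ = -3H² - 2ky`, `ẏ = -2yH`
with `y > 0`, the quantity `(H² + ky)/y³` is conserved. -/
theorem stmt5 (k : ℝ) (hk : k = -1 ∨ k = 0 ∨ k = 1)
    (I : Set ℝ) (hI : Convex ℝ I)
    (H y H' y' : ℝ → ℝ)
    (hypos : ∀ t ∈ I, 0 < y t)
    (hH : ∀ t ∈ I, HasDerivAt H (H' t) t) (hy : ∀ t ∈ I, HasDerivAt y (y' t) t)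
    (heqH : ∀ t ∈ I, H' t = -3 * (H t) ^ 2 - 2 * k * y t)
    (heqy : ∀ t ∈ I, y' t = -2 * y t * H t) :
    ∀ s ∈ I, ∀ t ∈ I,
      ((H s) ^ 2 + k * y s) / (y s) ^ 3 = ((H t) ^ 2 + k * y t) / (y t) ^ 3 :=
  stmt5_general k I hI H y H' y' hypos hH hy heqH heqy
end

section
/- Let λ < 0 and set H_dS = √(5/(24|λ|)). Then a(t) = a₀ e^{H_dS t} and φ(t) = φ₀ e^{-(5/2) H_dS t} satisfy the pure Gauss-Bonnet equations 5/(2ȧ²) = -12λ/a² and φ̇/φ = 12λ ȧ³/a³. -/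
/-! Both fields are exponentials, so `ȧ = H a` and `φ̇ = -(5/2) H φ`; the two equations then
reduce to the single algebraic identity `-24 λ H² = 5`, which is how `H_dS` is chosen. -/

open Real

lemma deriv_const_mul_exp_mul (c k t : ℝ) :
    deriv (fun s => c * exp (k * s)) t = k * (c * exp (k * t)) := by
  have h := (((hasDerivAt_id' t).const_mul k).exp).const_mul c
  rw [h.deriv]
  ring

section PureGaussBonnet

variable {lam H : ℝ}

lemma sq_mul_neg_twentyFour_mul_eq_five (hlam : lam < 0) :
    sqrt (5 / (24 * |lam|)) ^ 2 * (-24 * lam) = 5 := by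
  have hlam' : 0 < -lam := neg_pos.mpr hlam
  rw [sq_sqrt (by positivity), abs_of_neg hlam]
  field_simp [hlam.ne]

lemma friedmann_of_deriv_eq_mul {a : ℝ → ℝ} {t : ℝ} (hH : H ^ 2 * (-24 * lam) = 5)
    (ha : a t ≠ 0) (hda : deriv a t = H * a t) :
    5 / (2 * (deriv a t) ^ 2) = -12 * lam / (a t) ^ 2 := by
  have hH0 : H ≠ 0 := by rintro rfl; norm_num at hH
  rw [hda, div_eq_div_iff (by positivity) (by positivity)]
  linear_combination (-(a t) ^ 2) * hH

lemma scalar_eq_of_deriv_eq_mul {a φ : ℝ → ℝ} {t : ℝ} (hH : H ^ 2 * (-24 * lam) = 5)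
    (ha : a t ≠ 0) (hφ : φ t ≠ 0) (hda : deriv a t = H * a t)
    (hdφ : deriv φ t = -(5 / 2) * H * φ t) :
    deriv φ t / φ t = 12 * lam * (deriv a t) ^ 3 / (a t) ^ 3 := by
  rw [hda, hdφ, div_eq_div_iff hφ (by positivity)]
  linear_combination (H * φ t * a t ^ 3 / 2) * hH

end PureGaussBonnet

/-- Pure Gauss-Bonnet de Sitter solution: for `λ < 0`, `a(t) = a₀ e^{H_dS t}` and
`φ(t) = φ₀ e^{-(5/2)H_dS t}` with `H_dS = √(5/(24|λ|))` solve the pure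
Gauss-Bonnet equations. -/
theorem stmt12 (lam a₀ φ₀ : ℝ) (hlam : lam < 0) (ha₀ : 0 < a₀) (hφ₀ : φ₀ ≠ 0)
    (HdS : ℝ) (hHdS : HdS = Real.sqrt (5 / (24 * |lam|)))
    (a φ : ℝ → ℝ)
    (ha : a = fun t : ℝ => a₀ * Real.exp (HdS * t))
    (hφ : φ = fun t : ℝ => φ₀ * Real.exp (-(5 / 2) * HdS * t)) :
    ∀ t : ℝ,
      5 / (2 * (deriv a t) ^ 2) = -12 * lam / (a t) ^ 2 ∧
      deriv φ t / φ t = 12 * lam * (deriv a t) ^ 3 / (a t) ^ 3 := by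
  intro t
  have hH : HdS ^ 2 * (-24 * lam) = 5 := hHdS ▸ sq_mul_neg_twentyFour_mul_eq_five hlam
  have hat : a t ≠ 0 := by subst ha; positivity
  have hφt : φ t ≠ 0 := by subst hφ; simp [hφ₀]
  have hda : deriv a t = HdS * a t := by subst ha; exact deriv_const_mul_exp_mul _ _ _
  have hdφ : deriv φ t = -(5 / 2) * HdS * φ t := by subst hφ; exact deriv_const_mul_exp_mul _ _ _
  exact ⟨friedmann_of_deriv_eq_mul hH hat hda, scalar_eq_of_deriv_eq_mul hH hat hφt hda hdφ⟩
end
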